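/- If two strictly increasing sequences x_1 < ... < x_n and y_n < y_{n-1} < ... < y_1 are given (so y is strictly decreasing in the same index ordering as x is increasing), then there exist strictly increasing functions f and g on ℝ such that f(x_j) + g(y_j) is a constant independent of j. -/

import Mathlib

/-- Lemma A.2 as applied: `x` strictly increasing, `y` strictly decreasing, then
there are strictly increasing `f g : ℝ → ℝ` with `f (x j) + g (y j)` constant. -/
theorem stmt_1 (n : ℕ) (x y : Fin n → ℝ) (hx : StrictMono x) (hy : StrictAnti y) :
    ∃ f g : ℝ → ℝ, StrictMono f ∧ StrictMono g ∧
      ∃ c : ℝ, ∀ j : Fin n, f (x j) + g (y j) = c := by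
  rcases Nat.eq_zero_or_pos n with hn | hn
  · exact ⟨id, id, strictMono_id, strictMono_id, 0, fun j => absurd j.2 (by omega)⟩
  set m := n - 1 with hm
  have hmn : ∀ i : ℕ, min i m < n := fun i => by omega
  set x' : ℕ → ℝ := fun i => x ⟨min i m, hmn i⟩ with hx'
  set y' : ℕ → ℝ := fun i => y ⟨min i m, hmn i⟩ with hy'
  have hx'mono : Monotone x' := fun a b hab =>
    hx.monotone (by simp only [Fin.mk_le_mk]; omega)
  have hy'anti : Antitone y' := fun a b hab =>
    hy.antitone (by simp only [Fin.mk_le_mk]; omega)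
  have hdnn₁ : ∀ i : ℕ, (0:ℝ) ≤ y' i - y' (i+1) := fun i =>
    sub_nonneg.2 (hy'anti (Nat.le_succ i))
  have hdnn₂ : ∀ i : ℕ, (0:ℝ) ≤ x' (i+1) - x' i := fun i =>
    sub_nonneg.2 (hx'mono (Nat.le_succ i))
  refine ⟨fun t => t + ∑ j ∈ Finset.range m, (if x' (j+1) ≤ t then y' j - y' (j+1) else 0),
          fun t => t + ∑ j ∈ Finset.range m, (if y' j ≤ t then x' (j+1) - x' j else 0),
          ?_, ?_, y' 0 + x' m, ?_⟩
  · intro a b hab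
    have hsum : (∑ j ∈ Finset.range m, (if x' (j+1) ≤ a then y' j - y' (j+1) else 0)) ≤
        ∑ j ∈ Finset.range m, (if x' (j+1) ≤ b then y' j - y' (j+1) else 0) := by
      refine Finset.sum_le_sum fun j _ => ?_
      split_ifs with h1 h2 <;> linarith [hdnn₁ j]
    exact add_lt_add_of_lt_of_le hab hsum
  · intro a b hab
    have hsum : (∑ j ∈ Finset.range m, (if y' j ≤ a then x' (j+1) - x' j else 0)) ≤
        ∑ j ∈ Finset.range m, (if y' j ≤ b then x' (j+1) - x' j else 0) := by
      refine Finset.sum_le_sum fun j _ => ?_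
      split_ifs with h1 h2 <;> linarith [hdnn₂ j]
    exact add_lt_add_of_lt_of_le hab hsum
  · intro j
    set k := (j : ℕ) with hk
    have hkn : k < n := j.2
    have hkm : k ≤ m := by omega
    have hxk : x j = x' k := by
      simp only [hx', Nat.min_eq_left hkm]
      rfl
    have hyk : y j = y' k := by
      simp only [hy', Nat.min_eq_left hkm]
      rfl
    have hiff₁ : ∀ i, i ∈ Finset.range m → (x' (i+1) ≤ x' k ↔ i + 1 ≤ k) := by
      intro i hi
      rw [Finset.mem_range] at hi
      simp only [hx', Nat.min_eq_left (show i + 1 ≤ m by omega), Nat.min_eq_left hkm]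
      rw [hx.le_iff_le, Fin.mk_le_mk]
    have hiff₂ : ∀ i, i ∈ Finset.range m → (y' i ≤ y' k ↔ k ≤ i) := by
      intro i hi
      rw [Finset.mem_range] at hi
      simp only [hy', Nat.min_eq_left (show i ≤ m by omega), Nat.min_eq_left hkm]
      rw [hy.le_iff_ge, Fin.mk_le_mk]
    have hS₁ : (∑ i ∈ Finset.range m, (if x' (i+1) ≤ x' k then y' i - y' (i+1) else 0))
        = y' 0 - y' k := by
      rw [Finset.sum_congr rfl fun i hi => by
        rw [if_congr (hiff₁ i hi) rfl rfl]]
      have : (∑ i ∈ Finset.range m, (if i + 1 ≤ k then y' i - y' (i+1) else 0))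
          = ∑ i ∈ Finset.range k, (y' i - y' (i+1)) := by
        rw [Finset.sum_ite, Finset.sum_const_zero, add_zero]
        apply Finset.sum_congr _ fun _ _ => rfl
        ext i
        simp only [Finset.mem_filter, Finset.mem_range]
        omega
      rw [this, Finset.sum_range_sub' y' k]
    have hS₂ : (∑ i ∈ Finset.range m, (if y' i ≤ y' k then x' (i+1) - x' i else 0))
        = x' m - x' k := by
      rw [Finset.sum_congr rfl fun i hi => by
        rw [if_congr (hiff₂ i hi) rfl rfl]]
      have : (∑ i ∈ Finset.range m, (if k ≤ i then x' (i+1) - x' i else 0))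
          = ∑ i ∈ Finset.Ico k m, (x' (i+1) - x' i) := by
        rw [Finset.sum_ite, Finset.sum_const_zero, add_zero]
        apply Finset.sum_congr _ fun _ _ => rfl
        ext i
        simp only [Finset.mem_filter, Finset.mem_range, Finset.mem_Ico]
        omega
      rw [this, Finset.sum_Ico_eq_sub _ hkm, Finset.sum_range_sub x',
        Finset.sum_range_sub x']
      ring
    rw [hxk, hyk]
    dsimp only
    rw [hS₁, hS₂]
    ring
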